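/- Let d = 2k+1 ≥ 5 be an odd integer and let (1,γ,δ) ∈ W_d. There exist (1,γ₁,δ₁), (2,γ₂,δ₂) ∈ W_d with (γ₂,δ₂) ≠ (0,d), γ₁ + γ₂ = γ and δ₁ + δ₂ = δ + d if and only if it is not the case that γ = 0 and 0 ≤ δ ≤ k, and it is not the case that (γ,δ) = (1, k−1). (The monomial w_{(1,γ,δ)}w_{(2,0,d)} admits a non-trivial suitable 2-binomial exactly outside these exceptions.) -/

import Mathlib

/-- `W_d`: triples `(r,γ,δ)` encoding the degree-`d` monomials invariant under the
action of the diagonal matrix `M(1,e,e²,e³)`. -/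
def Wset (d : ℕ) : Set (ℤ × ℤ × ℤ) :=
  {x | 0 ≤ x.1 ∧ x.1 ≤ 3 ∧ 0 ≤ x.2.1 ∧ 0 ≤ x.2.2 ∧
    0 ≤ x.2.2 + 2 * x.2.1 + (1 - x.1) * (d : ℤ) ∧ 2 * x.2.2 + 3 * x.2.1 ≤ x.1 * (d : ℤ)}

/-!
A decomposition needs `γ₂ ≠ 0`, since `(2,0,δ₂) ∈ W_d` forces `δ₂ = d`;
for `γ = 1` this leaves `(γ₂,δ₂) = (1,d-2)`, which pushes `δ₁ = δ + 2` beyond `k` exactly when `δ = k - 1`.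
Conversely, writing `γ = 2m` or `γ = 2m+1`, the part `(2, γ₂, δ₂)` takes `γ₂ ∈ {2m, 2m+1}`
with `δ₂` chosen so that `2δ₂ + 3γ₂` is `2d` or `2d - 1`, and `(1, γ - γ₂, δ + d - δ₂)`
is then in `W_d`.
-/

section

variable {d : ℕ} {γ δ : ℤ}

@[simp]
lemma mem_Wset_one_iff : ((1 : ℤ), γ, δ) ∈ Wset d ↔ 0 ≤ γ ∧ 0 ≤ δ ∧ 2 * δ + 3 * γ ≤ d := by
  simp only [Wset, Set.mem_ofPred_eq]
  omega

@[simp]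
lemma mem_Wset_two_iff :
    ((2 : ℤ), γ, δ) ∈ Wset d ↔ 0 ≤ γ ∧ 0 ≤ δ ∧ d ≤ δ + 2 * γ ∧ 2 * δ + 3 * γ ≤ 2 * d := by
  simp only [Wset, Set.mem_ofPred_eq]
  omega

/-- The monomial `w_{(1,γ,δ)} w_{(2,0,d)}` admits a non-trivial suitable 2-binomial. -/
def HasNontrivialBinomial (d : ℕ) (γ δ : ℤ) : Prop :=
  ∃ γ₁ δ₁ γ₂ δ₂ : ℤ, ((1:ℤ), γ₁, δ₁) ∈ Wset d ∧ ((2:ℤ), γ₂, δ₂) ∈ Wset d ∧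
    (γ₂, δ₂) ≠ ((0:ℤ), (d:ℤ)) ∧ γ₁ + γ₂ = γ ∧ δ₁ + δ₂ = δ + (d:ℤ)

lemma eq_of_mem_Wset_two_zero (h : ((2 : ℤ), 0, δ) ∈ Wset d) : δ = d := by
  rw [mem_Wset_two_iff] at h
  omega

lemma eq_of_mem_Wset_two_one (h : ((2 : ℤ), 1, δ) ∈ Wset d) : δ = d - 2 := by
  rw [mem_Wset_two_iff] at h
  omega

namespace HasNontrivialBinomial

lemma gamma_ne_zero (h : HasNontrivialBinomial d γ δ) : γ ≠ 0 := by
  obtain ⟨γ₁, δ₁, γ₂, δ₂, h₁, h₂, hne, hγ, -⟩ := h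
  rw [mem_Wset_one_iff] at h₁
  intro hγ0
  obtain rfl : γ₂ = 0 := by have := (mem_Wset_two_iff.mp h₂).1; omega
  exact hne (by rw [eq_of_mem_Wset_two_zero h₂])

lemma two_mul_add_four_le (h : HasNontrivialBinomial d 1 δ) : 2 * δ + 4 ≤ d := by
  obtain ⟨γ₁, δ₁, γ₂, δ₂, h₁, h₂, hne, hγ, hδ⟩ := h
  rw [mem_Wset_one_iff] at h₁
  obtain rfl | rfl : γ₂ = 0 ∨ γ₂ = 1 := by have := (mem_Wset_two_iff.mp h₂).1; omega
  · exact absurd (by rw [eq_of_mem_Wset_two_zero h₂]) hne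
  · have := eq_of_mem_Wset_two_one h₂
    omega

end HasNontrivialBinomial

lemma hasNontrivialBinomial_of_even {m : ℤ} (hm : 0 < m) (hγ : γ = 2 * m) (hδ : 0 ≤ δ)
    (hle : 2 * δ + 3 * γ ≤ d) : HasNontrivialBinomial d γ δ :=
  ⟨0, δ + 3 * m, 2 * m, d - 3 * m, by simp only [mem_Wset_one_iff]; omega,
    by simp only [mem_Wset_two_iff]; omega, by simp [hm.ne'], by omega, by omega⟩

lemma hasNontrivialBinomial_of_odd_of_eq {m : ℤ} (hm : 0 < m) (hγ : γ = 2 * m + 1)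
    (hδ : 0 ≤ δ) (heq : 2 * δ + 3 * γ = d) : HasNontrivialBinomial d γ δ :=
  ⟨1, δ + 3 * m, 2 * m, d - 3 * m, by simp only [mem_Wset_one_iff]; omega,
    by simp only [mem_Wset_two_iff]; omega, by simp [hm.ne'], by omega, by omega⟩

lemma hasNontrivialBinomial_of_odd_of_lt {m : ℤ} (hm : 0 ≤ m) (hγ : γ = 2 * m + 1)
    (hδ : 0 ≤ δ) (hlt : 2 * δ + 3 * γ < d) : HasNontrivialBinomial d γ δ :=
  ⟨0, δ + 3 * m + 2, 2 * m + 1, d - 3 * m - 2, by simp only [mem_Wset_one_iff]; omega,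
    by simp only [mem_Wset_two_iff]; omega, by simp only [ne_eq, Prod.mk.injEq]; omega, by omega, by omega⟩

end

theorem stmt15_general (d k : ℕ) (hdk : d = 2 * k + 1)
    (γ δ : ℤ) (hmem : ((1:ℤ), γ, δ) ∈ Wset d) :
    (∃ γ₁ δ₁ γ₂ δ₂ : ℤ, ((1:ℤ), γ₁, δ₁) ∈ Wset d ∧ ((2:ℤ), γ₂, δ₂) ∈ Wset d ∧
        (γ₂, δ₂) ≠ ((0:ℤ), (d:ℤ)) ∧ γ₁ + γ₂ = γ ∧ δ₁ + δ₂ = δ + (d:ℤ)) ↔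
      (¬ (γ = 0 ∧ 0 ≤ δ ∧ δ ≤ (k:ℤ)) ∧ ¬ (γ = 1 ∧ δ = (k:ℤ) - 1)) := by
  change HasNontrivialBinomial d γ δ ↔ _
  obtain ⟨hγ, hδ, hle⟩ := mem_Wset_one_iff.mp hmem
  constructor
  · intro h
    refine ⟨fun h0 => h.gamma_ne_zero h0.1, ?_⟩
    rintro ⟨rfl, rfl⟩
    have := h.two_mul_add_four_le
    omega
  · rintro ⟨hne0, hne1⟩
    obtain ⟨m, hm⟩ | ⟨m, hm⟩ := Int.even_or_odd γ
    · exact hasNontrivialBinomial_of_even (m := m) (by omega) (by omega) hδ hle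
    · obtain heq | hlt := hle.eq_or_lt
      · exact hasNontrivialBinomial_of_odd_of_eq (by omega) hm hδ heq
      · exact hasNontrivialBinomial_of_odd_of_lt (by omega) hm hδ hlt

/-- For odd `d = 2k+1 ≥ 5` and `(1,γ,δ) ∈ W_d`, there are
`(1,γ₁,δ₁), (2,γ₂,δ₂) ∈ W_d` with `(γ₂,δ₂) ≠ (0,d)`, `γ₁+γ₂ = γ` and
`δ₁+δ₂ = δ+d` iff it is not the case that `γ = 0` and `0 ≤ δ ≤ k`, and it is not
the case that `(γ,δ) = (1, k−1)`. -/
theorem stmt15 (d k : ℕ) (hdk : d = 2 * k + 1) (hd : 5 ≤ d)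
    (γ δ : ℤ) (hmem : ((1:ℤ), γ, δ) ∈ Wset d) :
    (∃ γ₁ δ₁ γ₂ δ₂ : ℤ, ((1:ℤ), γ₁, δ₁) ∈ Wset d ∧ ((2:ℤ), γ₂, δ₂) ∈ Wset d ∧
        (γ₂, δ₂) ≠ ((0:ℤ), (d:ℤ)) ∧ γ₁ + γ₂ = γ ∧ δ₁ + δ₂ = δ + (d:ℤ)) ↔
      (¬ (γ = 0 ∧ 0 ≤ δ ∧ δ ≤ (k:ℤ)) ∧ ¬ (γ = 1 ∧ δ = (k:ℤ) - 1)) :=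
  stmt15_general d k hdk γ δ hmem
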